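/- arXiv:2408.12581 — 2 statements merged into one kernel-verified Lean document; each statement's English description precedes it below -/
import Mathlib

section
/- For each n, let R_n and S_{n,2},…,S_{n,J_n} be square-integrable real random variables on a probability space and let c_{n,2},…,c_{n,J_n} be nonnegative reals. Suppose there are constants 0 < v* ≤ w* < ∞ such that for all n and all j ≠ m: v* ≤ Var[S_{n,j}] ≤ w* and Cov(S_{n,j}, S_{n,m}) ≥ v*. If Var[R_n] → 0 and Σ_{j=2}^{J_n} c_{n,j} → 1 as n → ∞, then liminf_{n→∞} Var[R_n − Σ_{j=2}^{J_n} c_{n,j} S_{n,j}] ≥ v* > 0. (Asymptotic form of Theorem 1, part 1: the variance of the OLS mean estimator does not vanish, so the mean estimator is not consistent.) -/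
/-
Put `T_n = ∑ⱼ c_{n,j} S_{n,j}` and `s_n = ∑ⱼ c_{n,j} → 1`. All covariances of the `S_{n,j}` lie
in `[v*, w*]` (above, because `2 Cov(X, Y) ≤ Var X + Var Y`), so for nonnegative weights
`v* s_n² ≤ Var T_n ≤ w* s_n²`. By Cauchy–Schwarz,
`Var (R_n - T_n) ≥ Var T_n - 2 √(Var R_n) √(Var T_n) ≥ v* s_n² - 2 √(Var R_n) √(w* s_n²) → v*`,
while `Var (R_n - T_n) ≤ 2 (Var R_n + Var T_n)` stays bounded.
-/

open MeasureTheory Finset Filter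

/-- Cov(X, Y) := E[XY] − E[X]E[Y]. -/
noncomputable def cov {Ω : Type*} [MeasurableSpace Ω] (μ : Measure Ω) (X Y : Ω → ℝ) : ℝ :=
  (∫ ω, X ω * Y ω ∂μ) - (∫ ω, X ω ∂μ) * (∫ ω, Y ω ∂μ)

/-- Var[X] := Cov(X, X). -/
noncomputable def var {Ω : Type*} [MeasurableSpace Ω] (μ : Measure Ω) (X : Ω → ℝ) : ℝ :=
  cov μ X X

open ProbabilityTheory Topology

/-- In `ℝ` the `liminf` of a sequence that is not bounded above is junk, hence the upper bound. -/
lemma le_liminf_of_tendsto_of_le_of_le {ι : Type*} {l : Filter ι} [l.NeBot] {f g h : ι → ℝ}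
    {a b : ℝ} (hg : Tendsto g l (𝓝 a)) (hh : Tendsto h l (𝓝 b)) (hgf : ∀ i, g i ≤ f i)
    (hfh : ∀ i, f i ≤ h i) : a ≤ liminf f l := by
  have hf_bdd : IsBoundedUnder (· ≤ ·) l f :=
    hh.isBoundedUnder_le.mono_le (Eventually.of_forall hfh)
  calc a = liminf g l := hg.liminf_eq.symm
    _ ≤ liminf f l :=
      liminf_le_liminf (Eventually.of_forall hgf) hg.isBoundedUnder_ge hf_bdd.isCoboundedUnder_ge

section Covariance

variable {Ω : Type*} [MeasurableSpace Ω] {μ : Measure Ω} {X Y : Ω → ℝ}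

lemma cov_eq_covariance [IsProbabilityMeasure μ] (hX : MemLp X 2 μ) (hY : MemLp Y 2 μ) :
    cov μ X Y = cov[X, Y; μ] :=
  (covariance_eq_sub hX hY).symm

lemma var_eq_variance [IsProbabilityMeasure μ] (hX : MemLp X 2 μ) : var μ X = Var[X; μ] := by
  rw [var, cov_eq_covariance hX hX, covariance_self hX.aemeasurable]

variable [IsFiniteMeasure μ]

lemma two_mul_covariance_le_variance_add (hX : MemLp X 2 μ) (hY : MemLp Y 2 μ) :
    2 * cov[X, Y; μ] ≤ Var[X; μ] + Var[Y; μ] := by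
  have := variance_nonneg (X - Y) μ
  rw [variance_sub hX hY] at this
  linarith

lemma covariance_le_of_variance_le {b : ℝ} (hX : MemLp X 2 μ) (hY : MemLp Y 2 μ)
    (hXb : Var[X; μ] ≤ b) (hYb : Var[Y; μ] ≤ b) : cov[X, Y; μ] ≤ b := by
  linarith [two_mul_covariance_le_variance_add hX hY]

lemma variance_sub_le_two_mul_add (hX : MemLp X 2 μ) (hY : MemLp Y 2 μ) :
    Var[X - Y; μ] ≤ 2 * (Var[X; μ] + Var[Y; μ]) := by
  have := variance_nonneg (X + Y) μ
  rw [variance_add hX hY] at this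
  rw [variance_sub hX hY]
  linarith

lemma sq_covariance_le_variance_mul_variance (hX : MemLp X 2 μ) (hY : MemLp Y 2 μ) :
    cov[X, Y; μ] ^ 2 ≤ Var[X; μ] * Var[Y; μ] := by
  have hquad : ∀ t : ℝ, 0 ≤ Var[Y; μ] * (t * t) + 2 * cov[X, Y; μ] * t + Var[X; μ] := by
    intro t
    have := variance_nonneg (X + t • Y) μ
    rw [variance_add hX (hY.const_smul t), covariance_smul_right, variance_smul] at this
    linarith
  have := discrim_le_zero hquad
  rw [discrim] at this
  nlinarith

lemma variance_sub_two_mul_sqrt_le_variance_sub (hX : MemLp X 2 μ) (hY : MemLp Y 2 μ) :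
    Var[Y; μ] - 2 * √Var[X; μ] * √Var[Y; μ] ≤ Var[X - Y; μ] := by
  have hcov : cov[X, Y; μ] ≤ √Var[X; μ] * √Var[Y; μ] := by
    rw [← Real.sqrt_mul (variance_nonneg X μ)]
    exact (le_abs_self _).trans (Real.abs_le_sqrt (sq_covariance_le_variance_mul_variance hX hY))
  rw [variance_sub hX hY]
  linarith [variance_nonneg X μ]

end Covariance

section WeightedSum

variable {Ω ι : Type*} [MeasurableSpace Ω] {μ : Measure Ω} [IsFiniteMeasure μ]
  {s : Finset ι} {c : ι → ℝ} {S : ι → Ω → ℝ} {X : Ω → ℝ}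

lemma variance_fun_sum_mul (hS : ∀ i ∈ s, MemLp (S i) 2 μ) :
    Var[fun ω ↦ ∑ i ∈ s, c i * S i ω; μ] = ∑ i ∈ s, ∑ j ∈ s, c i * c j * cov[S i, S j; μ] := by
  rw [variance_fun_sum' fun i hi ↦ (hS i hi).const_mul (c i)]
  refine sum_congr rfl fun i _ ↦ sum_congr rfl fun j _ ↦ ?_
  rw [covariance_const_mul_left, covariance_const_mul_right, mul_assoc]

lemma mul_sq_sum_le_variance_fun_sum_mul {a : ℝ} (hc : ∀ i ∈ s, 0 ≤ c i)
    (hS : ∀ i ∈ s, MemLp (S i) 2 μ) (ha : ∀ i ∈ s, ∀ j ∈ s, a ≤ cov[S i, S j; μ]) :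
    a * (∑ i ∈ s, c i) ^ 2 ≤ Var[fun ω ↦ ∑ i ∈ s, c i * S i ω; μ] := by
  rw [variance_fun_sum_mul hS, sq, sum_mul_sum, mul_sum]
  refine sum_le_sum fun i hi ↦ ?_
  rw [mul_sum]
  refine sum_le_sum fun j hj ↦ ?_
  rw [mul_comm]
  exact mul_le_mul_of_nonneg_left (ha i hi j hj) (mul_nonneg (hc i hi) (hc j hj))

lemma variance_fun_sum_mul_le_mul_sq_sum {b : ℝ} (hc : ∀ i ∈ s, 0 ≤ c i)
    (hS : ∀ i ∈ s, MemLp (S i) 2 μ) (hb : ∀ i ∈ s, ∀ j ∈ s, cov[S i, S j; μ] ≤ b) :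
    Var[fun ω ↦ ∑ i ∈ s, c i * S i ω; μ] ≤ b * (∑ i ∈ s, c i) ^ 2 := by
  rw [variance_fun_sum_mul hS, sq, sum_mul_sum, mul_sum]
  refine sum_le_sum fun i hi ↦ ?_
  rw [mul_sum]
  refine sum_le_sum fun j hj ↦ ?_
  rw [mul_comm b]
  exact mul_le_mul_of_nonneg_left (hb i hi j hj) (mul_nonneg (hc i hi) (hc j hj))

lemma le_variance_sub_fun_sum_mul {a b : ℝ} (hX : MemLp X 2 μ) (hc : ∀ i ∈ s, 0 ≤ c i)
    (hS : ∀ i ∈ s, MemLp (S i) 2 μ) (ha : ∀ i ∈ s, ∀ j ∈ s, a ≤ cov[S i, S j; μ])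
    (hb : ∀ i ∈ s, ∀ j ∈ s, cov[S i, S j; μ] ≤ b) :
    a * (∑ i ∈ s, c i) ^ 2 - 2 * √Var[X; μ] * √(b * (∑ i ∈ s, c i) ^ 2) ≤
      Var[fun ω ↦ X ω - ∑ i ∈ s, c i * S i ω; μ] := by
  have hT := memLp_finsetSum s fun i hi ↦ (hS i hi).const_mul (c i)
  have hT_le := variance_fun_sum_mul_le_mul_sq_sum hc hS hb
  calc _ ≤ Var[fun ω ↦ ∑ i ∈ s, c i * S i ω; μ] -
        2 * √Var[X; μ] * √Var[fun ω ↦ ∑ i ∈ s, c i * S i ω; μ] := by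
        gcongr
        exact mul_sq_sum_le_variance_fun_sum_mul hc hS ha
    _ ≤ _ := variance_sub_two_mul_sqrt_le_variance_sub hX hT

lemma variance_sub_fun_sum_mul_le {b : ℝ} (hX : MemLp X 2 μ) (hc : ∀ i ∈ s, 0 ≤ c i)
    (hS : ∀ i ∈ s, MemLp (S i) 2 μ) (hb : ∀ i ∈ s, ∀ j ∈ s, cov[S i, S j; μ] ≤ b) :
    Var[fun ω ↦ X ω - ∑ i ∈ s, c i * S i ω; μ] ≤ 2 * (Var[X; μ] + b * (∑ i ∈ s, c i) ^ 2) := by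
  have hT := memLp_finsetSum s fun i hi ↦ (hS i hi).const_mul (c i)
  grw [← variance_fun_sum_mul_le_mul_sq_sum hc hS hb]
  exact variance_sub_le_two_mul_add hX hT

end WeightedSum

theorem stmt1_general {Ω : Type*} [MeasurableSpace Ω] (μ : Measure Ω) [IsProbabilityMeasure μ]
    (J : ℕ → ℕ) (R : ℕ → Ω → ℝ) (S : ℕ → ℕ → Ω → ℝ) (c : ℕ → ℕ → ℝ)
    (vstar wstar : ℝ)
    (hR : ∀ n, MemLp (R n) 2 μ)
    (hS : ∀ n, ∀ j ∈ Finset.Icc 2 (J n), MemLp (S n j) 2 μ)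
    (hc : ∀ n, ∀ j ∈ Finset.Icc 2 (J n), 0 ≤ c n j)
    (hvarlb : ∀ n, ∀ j ∈ Finset.Icc 2 (J n), vstar ≤ var μ (S n j))
    (hvarub : ∀ n, ∀ j ∈ Finset.Icc 2 (J n), var μ (S n j) ≤ wstar)
    (hcov : ∀ n, ∀ j ∈ Finset.Icc 2 (J n), ∀ m ∈ Finset.Icc 2 (J n), j ≠ m →
      vstar ≤ cov μ (S n j) (S n m))
    (hRvar : Tendsto (fun n => var μ (R n)) atTop (nhds 0))
    (hcsum : Tendsto (fun n => ∑ j ∈ Finset.Icc 2 (J n), c n j) atTop (nhds 1)) :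
    vstar ≤ liminf (fun n =>
      var μ (fun ω => R n ω - ∑ j ∈ Finset.Icc 2 (J n), c n j * S n j ω)) atTop := by
  have hcov_ge : ∀ n, ∀ j ∈ Icc 2 (J n), ∀ m ∈ Icc 2 (J n), vstar ≤ cov[S n j, S n m; μ] := by
    intro n j hj m hm
    rw [← cov_eq_covariance (hS n j hj) (hS n m hm)]
    obtain rfl | hjm := eq_or_ne j m
    · exact hvarlb n j hj
    · exact hcov n j hj m hm hjm
  have hcov_le : ∀ n, ∀ j ∈ Icc 2 (J n), ∀ m ∈ Icc 2 (J n), cov[S n j, S n m; μ] ≤ wstar :=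
    fun n j hj m hm ↦ covariance_le_of_variance_le (hS n j hj) (hS n m hm)
      (var_eq_variance (hS n j hj) ▸ hvarub n j hj) (var_eq_variance (hS n m hm) ▸ hvarub n m hm)
  have hRvar' : Tendsto (fun n ↦ Var[R n; μ]) atTop (𝓝 0) := by
    simpa only [var_eq_variance (hR _)] using hRvar
  have hF (n : ℕ) : var μ (fun ω ↦ R n ω - ∑ j ∈ Icc 2 (J n), c n j * S n j ω) =
      Var[fun ω ↦ R n ω - ∑ j ∈ Icc 2 (J n), c n j * S n j ω; μ] :=
    var_eq_variance ((hR n).sub (memLp_finsetSum _ fun j hj ↦ (hS n j hj).const_mul _))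
  simp only [hF]
  refine le_liminf_of_tendsto_of_le_of_le ?_
    ((hRvar'.add ((hcsum.pow 2).const_mul wstar)).const_mul 2)
    (fun n ↦ le_variance_sub_fun_sum_mul (hR n) (hc n) (hS n) (hcov_ge n) (hcov_le n))
    (fun n ↦ variance_sub_fun_sum_mul_le (hR n) (hc n) (hS n) (hcov_le n))
  simpa using ((hcsum.pow 2).const_mul vstar).sub
    ((hRvar'.sqrt.const_mul 2).mul ((hcsum.pow 2).const_mul wstar).sqrt)

/-- Asymptotic form of Theorem 1, part 1: the variance of the OLS mean estimator
does not vanish. -/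
theorem stmt1 {Ω : Type*} [MeasurableSpace Ω] (μ : Measure Ω) [IsProbabilityMeasure μ]
    (J : ℕ → ℕ) (R : ℕ → Ω → ℝ) (S : ℕ → ℕ → Ω → ℝ) (c : ℕ → ℕ → ℝ)
    (vstar wstar : ℝ)
    (hR : ∀ n, MemLp (R n) 2 μ)
    (hS : ∀ n, ∀ j ∈ Finset.Icc 2 (J n), MemLp (S n j) 2 μ)
    (hc : ∀ n, ∀ j ∈ Finset.Icc 2 (J n), 0 ≤ c n j)
    (hv : 0 < vstar) (hvw : vstar ≤ wstar)
    (hvarlb : ∀ n, ∀ j ∈ Finset.Icc 2 (J n), vstar ≤ var μ (S n j))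
    (hvarub : ∀ n, ∀ j ∈ Finset.Icc 2 (J n), var μ (S n j) ≤ wstar)
    (hcov : ∀ n, ∀ j ∈ Finset.Icc 2 (J n), ∀ m ∈ Finset.Icc 2 (J n), j ≠ m →
      vstar ≤ cov μ (S n j) (S n m))
    (hRvar : Tendsto (fun n => var μ (R n)) atTop (nhds 0))
    (hcsum : Tendsto (fun n => ∑ j ∈ Finset.Icc 2 (J n), c n j) atTop (nhds 1)) :
    vstar ≤ liminf (fun n =>
      var μ (fun ω => R n ω - ∑ j ∈ Finset.Icc 2 (J n), c n j * S n j ω)) atTop :=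
  stmt1_general μ J R S c vstar wstar hR hS hc hvarlb hvarub hcov hRvar hcsum
end

section
/- Let A be a real N × K matrix and B a real N × L matrix, and let X = [A B] be the N × (K+L) block matrix. Assume XᵀX is invertible, AᵀA is invertible, and Bᵀ(I_N − H_A)B is invertible, where H_A := A(AᵀA)⁻¹Aᵀ. Then for every r ∈ ℝ^N, the last L coordinates of the OLS solution (XᵀX)⁻¹ Xᵀ r equal (Bᵀ(I_N − H_A)B)⁻¹ Bᵀ(I_N − H_A) r. (This is the separated formula ŝ = (B′(I − H_A)B)⁻¹ B′(I − H_A) r for the shift estimator obtained by block matrix inversion in Section 3.1.) -/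
/-!
Write `H = A(AᵀA)⁻¹Aᵀ`, so that `AᵀH = Aᵀ` and `Aᵀ(1 - H) = 0`. If `Q` solves the reduced normal
equations `Bᵀ(1 - H)B Q = Bᵀ(1 - H)` and `P = (AᵀA)⁻¹Aᵀ(1 - BQ)`, then the fitted matrix is
`AP + BQ = H + (1 - H)BQ`, which satisfies the full normal equations `Xᵀ(AP + BQ) = Xᵀ`. Hence
`(XᵀX)⁻¹Xᵀ` has row blocks `P` and `Q`. The Schur complement of `AᵀA` in `XᵀX` is `Bᵀ(1 - H)B`, so
`det (XᵀX) = det (AᵀA) · det (Bᵀ(1 - H)B)`.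
-/

open Matrix

namespace Matrix

variable {R : Type*} [CommRing R] {n k l : Type*} [Fintype n] [Fintype k] [Fintype l]
  [DecidableEq k]

noncomputable def hatMatrix (A : Matrix n k R) : Matrix n n R := A * (Aᵀ * A)⁻¹ * Aᵀ

variable {A : Matrix n k R} {B : Matrix n l R}

theorem transpose_mul_hatMatrix (hA : IsUnit (Aᵀ * A).det) : Aᵀ * hatMatrix A = Aᵀ := by
  rw [hatMatrix, ← Matrix.mul_assoc, ← Matrix.mul_assoc, mul_nonsing_inv _ hA, Matrix.one_mul]

variable [DecidableEq n]

theorem transpose_mul_one_sub_hatMatrix (hA : IsUnit (Aᵀ * A).det) :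
    Aᵀ * (1 - hatMatrix A) = 0 := by
  rw [Matrix.mul_sub, Matrix.mul_one, transpose_mul_hatMatrix hA, sub_self]

theorem det_transpose_fromCols_mul_self [DecidableEq l] (hA : IsUnit (Aᵀ * A).det) :
    ((fromCols A B)ᵀ * fromCols A B).det = (Aᵀ * A).det * (Bᵀ * (1 - hatMatrix A) * B).det := by
  let _ := invertibleOfIsUnitDet _ hA
  rw [transpose_fromCols, fromRows_mul_fromCols, det_fromBlocks₁₁, invOf_eq_nonsing_inv]
  simp only [hatMatrix, Matrix.mul_sub, Matrix.sub_mul, Matrix.mul_one, Matrix.mul_assoc]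

theorem fromCols_mul_fromRows_eq_hatMatrix_add (Q : Matrix l n R) :
    fromCols A B * fromRows ((Aᵀ * A)⁻¹ * Aᵀ * (1 - B * Q)) Q
      = hatMatrix A + (1 - hatMatrix A) * B * Q := by
  rw [fromCols_mul_fromRows]
  simp only [hatMatrix, Matrix.mul_sub, Matrix.sub_mul, Matrix.mul_one, Matrix.one_mul,
    Matrix.mul_assoc]
  abel

theorem gram_fromCols_mul_fromRows (hA : IsUnit (Aᵀ * A).det) {Q : Matrix l n R}
    (hQ : Bᵀ * (1 - hatMatrix A) * B * Q = Bᵀ * (1 - hatMatrix A)) :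
    (fromCols A B)ᵀ * fromCols A B * fromRows ((Aᵀ * A)⁻¹ * Aᵀ * (1 - B * Q)) Q
      = (fromCols A B)ᵀ := by
  rw [Matrix.mul_assoc, fromCols_mul_fromRows_eq_hatMatrix_add, transpose_fromCols, fromRows_mul]
  congr 1
  · simp only [Matrix.mul_add, ← Matrix.mul_assoc, transpose_mul_hatMatrix hA,
      transpose_mul_one_sub_hatMatrix hA, Matrix.zero_mul, add_zero]
  · simp only [Matrix.mul_add, ← Matrix.mul_assoc, hQ]
    rw [Matrix.mul_sub, Matrix.mul_one]
    abel

theorem inv_gram_fromCols_mul_transpose [DecidableEq l] (hA : IsUnit (Aᵀ * A).det)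
    (hB : IsUnit (Bᵀ * (1 - hatMatrix A) * B).det) {Q : Matrix l n R}
    (hQ : Bᵀ * (1 - hatMatrix A) * B * Q = Bᵀ * (1 - hatMatrix A)) :
    ((fromCols A B)ᵀ * fromCols A B)⁻¹ * (fromCols A B)ᵀ
      = fromRows ((Aᵀ * A)⁻¹ * Aᵀ * (1 - B * Q)) Q := by
  have hX : IsUnit ((fromCols A B)ᵀ * fromCols A B).det := by
    rw [det_transpose_fromCols_mul_self hA]
    exact hA.mul hB
  let _ := invertibleOfIsUnitDet _ hX
  exact (inv_mul_eq_iff_eq_mul_of_invertible _ _ _).2 (gram_fromCols_mul_fromRows hA hQ).symm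

end Matrix

theorem stmt13_general (N K L : ℕ)
    (A : Matrix (Fin N) (Fin K) ℝ) (B : Matrix (Fin N) (Fin L) ℝ)
    (X : Matrix (Fin N) (Fin K ⊕ Fin L) ℝ) (hXdef : X = Matrix.fromCols A B)
    (HA : Matrix (Fin N) (Fin N) ℝ) (hHA : HA = A * (Aᵀ * A)⁻¹ * Aᵀ)
    (hA : IsUnit (Aᵀ * A).det)
    (hB : IsUnit (Bᵀ * (1 - HA) * B).det)
    (r : Fin N → ℝ) :
    ∀ j : Fin L, ((Xᵀ * X)⁻¹ * Xᵀ).mulVec r (Sum.inr j)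
      = ((Bᵀ * (1 - HA) * B)⁻¹ * (Bᵀ * (1 - HA))).mulVec r j := by
  intro j
  subst hXdef
  obtain rfl : HA = hatMatrix A := hHA
  rw [inv_gram_fromCols_mul_transpose hA hB (mul_nonsing_inv_cancel_left _ _ hB), fromRows_mulVec]
  rfl

/-- Separated formula for the shift-estimator block of the OLS solution:
the last `L` coordinates of `(XᵀX)⁻¹Xᵀr` equal `(Bᵀ(I − H_A)B)⁻¹Bᵀ(I − H_A)r`. -/
theorem stmt13 (N K L : ℕ)
    (A : Matrix (Fin N) (Fin K) ℝ) (B : Matrix (Fin N) (Fin L) ℝ)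
    (X : Matrix (Fin N) (Fin K ⊕ Fin L) ℝ) (hXdef : X = Matrix.fromCols A B)
    (HA : Matrix (Fin N) (Fin N) ℝ) (hHA : HA = A * (Aᵀ * A)⁻¹ * Aᵀ)
    (hX : IsUnit (Xᵀ * X).det) (hA : IsUnit (Aᵀ * A).det)
    (hB : IsUnit (Bᵀ * (1 - HA) * B).det)
    (r : Fin N → ℝ) :
    ∀ j : Fin L, ((Xᵀ * X)⁻¹ * Xᵀ).mulVec r (Sum.inr j)
      = ((Bᵀ * (1 - HA) * B)⁻¹ * (Bᵀ * (1 - HA))).mulVec r j :=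
  stmt13_general N K L A B X hXdef HA hHA hA hB r
end
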